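/- arXiv:1204.1671 — 4 statements merged into one kernel-verified Lean document; each statement's English description precedes it below -/
import Mathlib

section
/- Fix θ > 0 and n ≥ 2, and for a partition λ of n define β_λ(θ) = 1 − min(θ,1) + (θ·n(λᵗ) − n(λ)) / (max(θ,1)·C(n,2)), where n(ν) = Σ_i C(ν_i, 2). If λ = (λ₁, n − λ₁) with n/2 ≤ λ₁ ≤ n−1 (a two-row partition), then β_λ(θ) ≤ 1 − min(θ,1)·2λ₁(n−λ₁)/(n(n−1)). -/
/-!
For a two-row shape `(a, b)` the conjugate has `min a b` columns of length two and the rest of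
length one, so `n(λ) = min a b`. With `b = n - a` one has `2 (C(a,2) + C(b,2)) = n(n-1) - 2ab`, and
`min(θ,1) · max(θ,1) = θ`; hence `β_λ(θ)` is exactly the claimed bound minus the nonnegative
correction `min a b / (max(θ,1) · C(n,2))`.
-/

open Finset

/-- The conjugate (transpose) partition. -/
def conjPart (n : ℕ) (l : ℕ → ℕ) (j : ℕ) : ℕ :=
  ((Finset.range n).filter fun i => j < l i).card

/-- `Nstat n l = Σ_i C(l_i, 2)`; this is `n(λᵗ)` in Macdonald's notation. -/
def Nstat (n : ℕ) (l : ℕ → ℕ) : ℕ :=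
  ∑ i ∈ Finset.range n, (l i).choose 2

/-- The eigenvalue `β_λ(θ) = 1 − min(θ,1) + (θ·n(λᵗ) − n(λ))/(max(θ,1)·C(n,2))`,
where `n(λᵗ) = Σ C(λ_i,2)` and `n(λ) = Σ C(λᵗ_i,2)`. -/
noncomputable def betaP (θ : ℝ) (n : ℕ) (l : ℕ → ℕ) : ℝ :=
  1 - min θ 1 + (θ * (Nstat n l : ℝ) - (Nstat n (conjPart n l) : ℝ)) /
    (max θ 1 * (n.choose 2 : ℝ))

def twoRow (a b : ℕ) : ℕ → ℕ := fun k => if k = 0 then a else if k = 1 then b else 0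

theorem sum_range_twoRow {M : Type*} [AddCommMonoid M] {n : ℕ} (hn : 2 ≤ n) (a b : ℕ)
    (g : ℕ → M) (hg : g 0 = 0) :
    ∑ i ∈ range n, g (twoRow a b i) = g a + g b := by
  have hrows : ({0, 1} : Finset ℕ) ⊆ range n := by
    intro i
    simp only [mem_insert, mem_singleton, mem_range]
    omega
  rw [← sum_subset hrows]
  · simp [twoRow]
  · intro i _ hi
    simp only [mem_insert, mem_singleton, not_or] at hi
    simp [twoRow, hi.1, hi.2, hg]

theorem conjPart_twoRow {n : ℕ} (hn : 2 ≤ n) (a b j : ℕ) :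
    conjPart n (twoRow a b) j = (if j < a then 1 else 0) + (if j < b then 1 else 0) := by
  rw [conjPart, card_filter]
  exact sum_range_twoRow hn a b (fun x => if j < x then 1 else 0) (by simp)

theorem Nstat_twoRow {n : ℕ} (hn : 2 ≤ n) (a b : ℕ) :
    Nstat n (twoRow a b) = a.choose 2 + b.choose 2 :=
  sum_range_twoRow hn a b (·.choose 2) rfl

theorem Nstat_conjPart_twoRow {n : ℕ} (hn : 2 ≤ n) {a b : ℕ} (hab : min a b ≤ n) :
    Nstat n (conjPart n (twoRow a b)) = min a b := by
  have hcol : ∀ j, (conjPart n (twoRow a b) j).choose 2 = if j < min a b then 1 else 0 := by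
    intro j
    rw [conjPart_twoRow hn]
    split_ifs <;> simp_all <;> omega
  have hcols : (range n).filter (· < min a b) = range (min a b) := by
    ext j
    simp only [mem_filter, mem_range]
    omega
  simp only [Nstat, hcol, sum_boole, Nat.cast_id, hcols, card_range]

theorem betaP_twoRow (θ : ℝ) {n a : ℕ} (hn : 2 ≤ n) (ha : a ≤ n) :
    betaP θ n (twoRow a (n - a)) =
      1 - min θ 1 * (2 * (a : ℝ) * ((n : ℝ) - a)) / ((n : ℝ) * ((n : ℝ) - 1))
        - (min a (n - a) : ℕ) / (max θ 1 * (n.choose 2 : ℝ)) := by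
  have hn1 : (n : ℝ) - 1 ≠ 0 := by
    have : (2 : ℝ) ≤ n := by exact_mod_cast hn
    linarith
  have hn0 : (n : ℝ) ≠ 0 := by positivity
  have hM : max θ 1 ≠ 0 := (lt_max_of_lt_right one_pos).ne'
  rw [betaP, Nstat_twoRow hn, Nstat_conjPart_twoRow hn (by omega)]
  push_cast [Nat.cast_choose_two, Nat.cast_sub ha]
  field_simp
  linear_combination -((n : ℝ) * (n - 1) - 2 * a * (n - a)) * min_mul_max θ 1

theorem beta_two_row_bound_general
    (θ : ℝ) (n : ℕ) (hn : 2 ≤ n) (l1 : ℕ)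
    (hl1 : l1 ≤ n - 1) :
    betaP θ n (fun k => if k = 0 then l1 else if k = 1 then n - l1 else 0)
      ≤ 1 - min θ 1 * (2 * (l1 : ℝ) * ((n : ℝ) - l1)) / ((n : ℝ) * ((n : ℝ) - 1)) := by
  have hcorrection : 0 ≤ ((min l1 (n - l1) : ℕ) : ℝ) / (max θ 1 * (n.choose 2 : ℝ)) := by
    positivity
  change betaP θ n (twoRow l1 (n - l1)) ≤ _
  rw [betaP_twoRow θ hn (by omega)]
  linarith

/-- for the two-row partition `λ = (λ₁, n − λ₁)` with
`n/2 ≤ λ₁ ≤ n − 1`, one has `β_λ(θ) ≤ 1 − min(θ,1)·2λ₁(n−λ₁)/(n(n−1))`. -/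
theorem beta_two_row_bound
    (θ : ℝ) (hθ : 0 < θ) (n : ℕ) (hn : 2 ≤ n) (l1 : ℕ)
    (hhalf : (n : ℝ) / 2 ≤ (l1 : ℝ)) (hl1 : l1 ≤ n - 1) :
    betaP θ n (fun k => if k = 0 then l1 else if k = 1 then n - l1 else 0)
      ≤ 1 - min θ 1 * (2 * (l1 : ℝ) * ((n : ℝ) - l1)) / ((n : ℝ) * ((n : ℝ) - 1)) :=
  beta_two_row_bound_general θ n hn l1 hl1
end

section
/- Fix θ > 0 and n ≥ 2, and for a partition λ of n define β_λ(θ) = 1 − min(θ,1) + (θ·n(λᵗ) − n(λ))/(max(θ,1)·C(n,2)). Then β_λ(θ) ≤ 1 − min(θ,1)·(1 − (λ₁ − 1)/(n − 1)), where λ₁ is the largest part of λ. -/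
open Finset

/-- `l` represents a partition of `n`: weakly decreasing, supported on `{0, …, n−1}`,
with parts summing to `n`. -/
def IsPartitionOf (n : ℕ) (l : ℕ → ℕ) : Prop :=
  Antitone l ∧ (∀ i, n ≤ i → l i = 0) ∧ ∑ i ∈ Finset.range n, l i = n

/- Proof idea: dropping the nonnegative term `n(λ)` and using `θ / max(θ,1) = min(θ,1)` leaves
`min(θ,1) · n(λᵗ) / C(n,2)`, and `2 n(λᵗ) = Σ λᵢ(λᵢ − 1) ≤ (λ₁ − 1) Σ λᵢ = (λ₁ − 1) n`. -/

theorem two_mul_sum_choose_two_le {ι : Type*} (s : Finset ι) (f : ι → ℕ) (a : ℕ)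
    (hf : ∀ i ∈ s, f i ≤ a) :
    2 * (∑ i ∈ s, ((f i).choose 2 : ℝ)) ≤ ((a : ℝ) - 1) * ∑ i ∈ s, (f i : ℝ) := by
  rw [Finset.mul_sum, Finset.mul_sum]
  refine Finset.sum_le_sum fun i hi => ?_
  have hfa : (f i : ℝ) ≤ a := by exact_mod_cast hf i hi
  rw [Nat.cast_choose_two]
  nlinarith [(f i).cast_nonneg (α := ℝ)]

theorem IsPartitionOf.two_mul_Nstat_le {n : ℕ} {l : ℕ → ℕ} (hl : IsPartitionOf n l) :
    2 * (Nstat n l : ℝ) ≤ ((l 0 : ℝ) - 1) * n := by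
  obtain ⟨hanti, -, hsum⟩ := hl
  have hsum' : ∑ i ∈ range n, (l i : ℝ) = n := by exact_mod_cast hsum
  rw [Nstat, Nat.cast_sum, ← hsum']
  exact two_mul_sum_choose_two_le _ _ _ fun i _ => hanti (Nat.zero_le i)

theorem IsPartitionOf.Nstat_div_choose_two_le {n : ℕ} {l : ℕ → ℕ} (hl : IsPartitionOf n l)
    (hn : 2 ≤ n) :
    (Nstat n l : ℝ) / n.choose 2 ≤ ((l 0 : ℝ) - 1) / ((n : ℝ) - 1) := by
  have hn' : (2 : ℝ) ≤ n := by exact_mod_cast hn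
  rw [Nat.cast_choose_two, div_le_div_iff₀ (by nlinarith) (by linarith)]
  nlinarith [hl.two_mul_Nstat_le]

theorem betaP_le (θ : ℝ) (n : ℕ) (l : ℕ → ℕ) :
    betaP θ n l ≤ 1 - min θ 1 + min θ 1 * ((Nstat n l : ℝ) / n.choose 2) := by
  have hmax : 0 < max θ 1 := lt_max_of_lt_right one_pos
  have hmin : min θ 1 = θ / max θ 1 := by rw [eq_div_iff hmax.ne', min_mul_max, mul_one]
  rw [betaP, hmin, div_mul_div_comm]
  exact add_le_add_right
    (div_le_div_of_nonneg_right (sub_le_self _ (Nat.cast_nonneg (α := ℝ) _)) (by positivity)) _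

/-- for any partition `λ` of `n` with largest part `λ₁ = l 0`,
`β_λ(θ) ≤ 1 − min(θ,1)·(1 − (λ₁ − 1)/(n − 1))`. -/
theorem beta_general_bound
    (θ : ℝ) (hθ : 0 < θ) (n : ℕ) (hn : 2 ≤ n) (l : ℕ → ℕ)
    (hl : IsPartitionOf n l) :
    betaP θ n l ≤ 1 - min θ 1 * (1 - ((l 0 : ℝ) - 1) / ((n : ℝ) - 1)) := by
  have hmin : 0 ≤ min θ 1 := le_min hθ.le zero_le_one
  calc betaP θ n l ≤ 1 - min θ 1 + min θ 1 * ((Nstat n l : ℝ) / n.choose 2) := betaP_le θ n l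
    _ ≤ 1 - min θ 1 + min θ 1 * (((l 0 : ℝ) - 1) / ((n : ℝ) - 1)) :=
      add_le_add_right (mul_le_mul_of_nonneg_left (hl.Nstat_div_choose_two_le hn) hmin) _
    _ = 1 - min θ 1 * (1 - ((l 0 : ℝ) - 1) / ((n : ℝ) - 1)) := by ring
end

section
/- Fix θ > 0 and n ≥ 2, and for a partition λ of n define β_λ(θ) = 1 − min(θ,1) + (θ·n(λᵗ) − n(λ))/(max(θ,1)·C(n,2)). If β_λ(θ) < 0, then β_{λᵗ}(θ) ≥ |β_λ(θ)|; in particular β_{λᵗ}(θ) > 0. -/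
open Finset

/-! Since `λᵗᵗ = λ`, the fractions in `β_λ` and `β_{λᵗ}` have numerators `θ a − b` and `θ b − a`
with `a = n(λᵗ)`, `b = n(λ)`, so
`β_λ + β_{λᵗ} = 2(1 − min(θ,1)) + (θ − 1)(a + b)/(max(θ,1) C(n,2))`.
Superadditivity of `x ↦ C(x,2)` gives `a, b ≤ C(n,2)`, as the parts of `λ` and of `λᵗ` sum to `n`.
For `θ ≥ 1` both terms are nonnegative; for `θ < 1` the sum is `(1 − θ)(2 − (a + b)/C(n,2)) ≥ 0`.
Hence `β_{λᵗ} ≥ −β_λ = |β_λ|` whenever `β_λ < 0`. -/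

theorem Nat.choose_add_choose_le_add_choose {k : ℕ} (hk : k ≠ 0) (a b : ℕ) :
    a.choose k + b.choose k ≤ (a + b).choose k := by
  obtain ⟨j, rfl⟩ := Nat.exists_add_one_eq.2 (Nat.pos_of_ne_zero hk)
  induction b with
  | zero => simp
  | succ b ih =>
    have := Nat.choose_le_choose j (Nat.le_add_left b a)
    rw [← add_assoc, Nat.choose_succ_succ' b, Nat.choose_succ_succ' (a + b)]
    omega

theorem Finset.sum_choose_le_choose_sum {ι : Type*} {k : ℕ} (hk : k ≠ 0) (s : Finset ι)
    (f : ι → ℕ) : ∑ i ∈ s, (f i).choose k ≤ (∑ i ∈ s, f i).choose k := by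
  induction s using Finset.cons_induction with
  | empty => simp [Nat.choose_eq_zero_of_lt (Nat.pos_of_ne_zero hk)]
  | cons a s ha ih =>
    rw [sum_cons, sum_cons]
    exact (Nat.add_le_add_left ih _).trans (Nat.choose_add_choose_le_add_choose hk _ _)

theorem Nstat_le_choose_two {n : ℕ} {l : ℕ → ℕ} (hl : ∑ i ∈ range n, l i = n) :
    Nstat n l ≤ n.choose 2 :=
  (sum_choose_le_choose_sum two_ne_zero (range n) l).trans_eq (by rw [hl])

theorem conjPart_le (n : ℕ) (l : ℕ → ℕ) (j : ℕ) : conjPart n l j ≤ n :=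
  (card_filter_le _ _).trans_eq (card_range n)

theorem Finset.card_filter_lt_range {m n : ℕ} (h : m ≤ n) :
    ((range n).filter (· < m)).card = m := by
  have : (range n).filter (· < m) = range m := by
    ext
    simp only [mem_filter, mem_range]
    omega
  rw [this, card_range]

theorem Antitone.lt_conjPart_iff {n : ℕ} {l : ℕ → ℕ} (hl : Antitone l) {i : ℕ} (hi : i < n)
    (j : ℕ) : i < conjPart n l j ↔ j < l i := by
  constructor
  · intro h
    by_contra! hj
    have : (range n).filter (fun k => j < l k) ⊆ range i := fun k hk => by
      simp only [mem_filter, mem_range] at hk ⊢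
      by_contra! hik
      exact (hk.2.trans_le ((hl hik).trans hj)).false
    exact h.not_ge ((card_le_card this).trans_eq (card_range i))
  · intro h
    have : range (i + 1) ⊆ (range n).filter (fun k => j < l k) := fun k hk => by
      simp only [mem_filter, mem_range] at hk ⊢
      exact ⟨by omega, h.trans_le (hl (by omega))⟩
    exact (card_range (i + 1)).symm.trans_le (card_le_card this)

namespace IsPartitionOf

variable {n : ℕ} {l : ℕ → ℕ}

theorem apply_le (hl : IsPartitionOf n l) (i : ℕ) : l i ≤ n := by
  rcases lt_or_ge i n with hi | hi
  · exact hl.2.2 ▸ single_le_sum (fun k _ => Nat.zero_le (l k)) (mem_range.2 hi)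
  · simp [hl.2.1 i hi]

theorem conjPart_conjPart (hl : IsPartitionOf n l) : conjPart n (conjPart n l) = l := by
  funext i
  rcases lt_or_ge i n with hi | hi
  · rw [conjPart, filter_congr fun j _ => hl.1.lt_conjPart_iff hi j,
      card_filter_lt_range (hl.apply_le i)]
  · rw [hl.2.1 i hi, conjPart, card_eq_zero, filter_eq_empty_iff]
    exact fun j _ => (conjPart_le n l j).trans hi |>.not_gt

theorem sum_conjPart (hl : IsPartitionOf n l) : ∑ j ∈ range n, conjPart n l j = n := by
  calc ∑ j ∈ range n, conjPart n l j
        = ∑ i ∈ range n, ((range n).filter (· < l i)).card := by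
          simp only [conjPart, card_filter]
          exact sum_comm
    _ = ∑ i ∈ range n, l i := sum_congr rfl fun i _ => card_filter_lt_range (hl.apply_le i)
    _ = n := hl.2.2

end IsPartitionOf

theorem two_mul_one_sub_min_add_div_nonneg {θ s C : ℝ} (hs : 0 ≤ s) (hsC : s ≤ 2 * C) :
    0 ≤ 2 * (1 - min θ 1) + (θ - 1) * s / (max θ 1 * C) := by
  have hC : 0 ≤ C := by linarith
  rcases le_total θ 1 with hθ | hθ
  · rw [min_eq_left hθ, max_eq_right hθ, one_mul, mul_div_assoc]
    have : s / C ≤ 2 := div_le_of_le_mul₀ hC zero_le_two hsC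
    nlinarith
  · rw [min_eq_right hθ, max_eq_left hθ, sub_self, mul_zero, zero_add]
    exact div_nonneg (mul_nonneg (by linarith) hs) (mul_nonneg (by linarith) hC)

theorem betaP_add_betaP_conjPart_nonneg (θ : ℝ) {n : ℕ} {l : ℕ → ℕ}
    (hl : IsPartitionOf n l) : 0 ≤ betaP θ n l + betaP θ n (conjPart n l) := by
  have hA : (Nstat n l : ℝ) ≤ n.choose 2 := by exact_mod_cast Nstat_le_choose_two hl.2.2
  have hB : (Nstat n (conjPart n l) : ℝ) ≤ n.choose 2 := by
    exact_mod_cast Nstat_le_choose_two hl.sum_conjPart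
  have key := two_mul_one_sub_min_add_div_nonneg (θ := θ) (C := n.choose 2)
    (by positivity : (0 : ℝ) ≤ Nstat n l + Nstat n (conjPart n l)) (by linarith)
  unfold betaP
  rw [hl.conjPart_conjPart]
  convert key using 1
  ring

theorem beta_conjugate_dominates_general
    (θ : ℝ) (n : ℕ) (l : ℕ → ℕ)
    (hl : IsPartitionOf n l)
    (hneg : betaP θ n l < 0) :
    |betaP θ n l| ≤ betaP θ n (conjPart n l) ∧ 0 < betaP θ n (conjPart n l) := by
  have hsum := betaP_add_betaP_conjPart_nonneg θ hl
  rw [abs_of_neg hneg]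
  constructor <;> linarith

/-- if `β_λ(θ) < 0` then `β_{λᵗ}(θ) ≥ |β_λ(θ)|`; in particular
`β_{λᵗ}(θ) > 0`. -/
theorem beta_conjugate_dominates
    (θ : ℝ) (hθ : 0 < θ) (n : ℕ) (hn : 2 ≤ n) (l : ℕ → ℕ)
    (hl : IsPartitionOf n l)
    (hneg : betaP θ n l < 0) :
    |betaP θ n l| ≤ betaP θ n (conjPart n l) ∧ 0 < betaP θ n (conjPart n l) :=
  beta_conjugate_dominates_general θ n l hl hneg
end

section
/- Fix θ > 0. For a partition λ of n, define j_λ(θ) = ∏_{s∈λ} ((a(s)+1)θ + ℓ(s)) · (a(s)θ + ℓ(s) + 1), where a(s) and ℓ(s) are the arm and leg lengths of the cell s. If λ = (λ₁, λ₂, …) and μ = (λ₂, λ₃, …) is the partition obtained by removing the first row, then j_λ(θ) ≥ (λ₁!)² · θ^{2λ₁ − 1} · λ₁^{1/θ − 1} · exp(−π²/(12θ²)) · j_μ(θ). -/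
open Finset Real

/-- `j_λ(θ) = ∏_{s∈λ} ((a(s)+1)θ + ℓ(s)) (a(s)θ + ℓ(s) + 1)`, where for the cell
`s = (i,j)` (0-indexed) the arm length is `a(s) = l i − j − 1` and the leg length is
`ℓ(s) = λᵗ_j − i − 1`. -/
noncomputable def jfun (θ : ℝ) (n : ℕ) (l : ℕ → ℕ) : ℝ :=
  ∏ i ∈ Finset.range n, ∏ j ∈ Finset.range (l i),
    ((((l i : ℝ) - j - 1) + 1) * θ + ((conjPart n l j : ℝ) - i - 1)) *
      (((l i : ℝ) - j - 1) * θ + ((conjPart n l j : ℝ) - i - 1) + 1)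

/-! The cells below the first row have the same arms and legs in `λ` and in `μ`, so `j_λ / j_μ`
is the product of the first-row factors. A first-row cell with arm `a` contributes at least
`((a+1)θ)(aθ+1)` (its leg is nonnegative), so that product is at least
`λ₁! θ^λ₁ ∏_{i<λ₁} (iθ+1) = λ₁! θ^λ₁ θ^(λ₁-1) (λ₁-1)! ∏_{i<λ₁-1} (1 + 1/(θ(i+1)))`.
With `x = 1/θ`, the bounds `log (1+t) ≥ t - t²/2`, `H_k ≥ log (k+1)` and `∑ 1/i² ≤ π²/6` give
`∏_{i<k} (1 + x/(i+1)) ≥ (k+1)^x exp (-x²π²/12)`. -/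

lemma sub_sq_div_two_le_log_one_add {t : ℝ} (ht : 0 ≤ t) : t - t ^ 2 / 2 ≤ log (1 + t) := by
  refine le_trans ?_ (le_log_one_add_of_nonneg ht)
  rw [le_div_iff₀ (by positivity)]
  nlinarith [pow_nonneg ht 3]

lemma log_add_one_le_sum_range_inv (k : ℕ) : log (k + 1) ≤ ∑ i ∈ range k, (1 : ℝ) / (i + 1) := by
  simpa [harmonic] using log_add_one_le_harmonic k

lemma sum_range_inv_add_one_sq_le (k : ℕ) : ∑ i ∈ range k, (1 : ℝ) / (i + 1) ^ 2 ≤ π ^ 2 / 6 := by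
  have := sum_le_hasSum (range (k + 1)) (fun i _ => by positivity) hasSum_zeta_two
  simpa [sum_range_succ'] using this

lemma rpow_mul_exp_le_prod_one_add_div {x : ℝ} (hx : 0 ≤ x) (k : ℕ) :
    ((k : ℝ) + 1) ^ x * exp (-(x ^ 2 * π ^ 2 / 12)) ≤ ∏ i ∈ range k, (1 + x / (i + 1)) := by
  have hpos : 0 < ∏ i ∈ range k, (1 + x / (i + 1)) := prod_pos fun i _ => by positivity
  rw [← exp_log hpos, rpow_def_of_pos (by positivity), ← exp_add, exp_le_exp,
    log_prod fun i _ => by positivity]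
  have hlog : ∑ i ∈ range k, (x / (i + 1) - (x / (i + 1)) ^ 2 / 2) ≤
      ∑ i ∈ range k, log (1 + x / (i + 1)) :=
    sum_le_sum fun i _ => sub_sq_div_two_le_log_one_add (by positivity)
  have hsplit : ∑ i ∈ range k, (x / (i + 1) - (x / (i + 1)) ^ 2 / 2) =
      x * ∑ i ∈ range k, (1 : ℝ) / (i + 1) - x ^ 2 / 2 * ∑ i ∈ range k, (1 : ℝ) / (i + 1) ^ 2 := by
    rw [mul_sum, mul_sum, ← sum_sub_distrib]
    exact sum_congr rfl fun i _ => by field_simp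
  nlinarith [log_add_one_le_sum_range_inv k, sum_range_inv_add_one_sq_le k, sq_nonneg x]

lemma prod_range_succ_mul_add_one {θ : ℝ} (hθ : θ ≠ 0) (k : ℕ) :
    ∏ i ∈ range (k + 1), ((i : ℝ) * θ + 1) =
      θ ^ k * k.factorial * ∏ i ∈ range k, (1 + θ⁻¹ / (i + 1)) := by
  have hterm : ∀ i : ℕ, ((i + 1 : ℕ) : ℝ) * θ + 1 = θ * ((i : ℝ) + 1) * (1 + θ⁻¹ / (i + 1)) := by
    intro i
    field_simp
    push_cast
    ring
  rw [prod_range_succ', prod_congr rfl fun i _ => hterm i, prod_mul_distrib, prod_mul_distrib,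
    prod_const, card_range]
  push_cast [← prod_range_add_one_eq_factorial]
  ring

lemma factorial_sq_mul_rpow_mul_exp_le (θ : ℝ) (hθ : 0 < θ) (m : ℕ) :
    (m.factorial : ℝ) ^ 2 * θ ^ (2 * (m : ℝ) - 1) * (m : ℝ) ^ (1 / θ - 1) *
        exp (-(π ^ 2) / (12 * θ ^ 2)) ≤
      m.factorial * θ ^ m * ∏ i ∈ range m, ((i : ℝ) * θ + 1) := by
  rcases m with _ | k
  · -- `0 ^ (1 / θ - 1)` vanishes unless `θ = 1`
    rcases eq_or_ne θ 1 with rfl | hθ1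
    · simpa using
        div_nonpos_of_nonpos_of_nonneg (neg_nonpos.2 (sq_nonneg π)) (by norm_num : (0 : ℝ) ≤ 12)
    · have : θ⁻¹ - 1 ≠ 0 := by
        rw [sub_ne_zero, ne_eq, inv_eq_one]; exact hθ1
      simp [zero_rpow this]
  have hθpow : θ ^ (2 * ((k + 1 : ℕ) : ℝ) - 1) = θ ^ (k + 1) * θ ^ k := by
    rw [← pow_add, ← rpow_natCast]; push_cast; ring_nf
  have hrpow : ((k + 1 : ℕ) : ℝ) ^ (1 / θ - 1) = ((k : ℝ) + 1) ^ θ⁻¹ / ((k : ℝ) + 1) := by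
    rw [rpow_sub (by positivity), rpow_one, one_div]; push_cast; rfl
  have hexp : -(π ^ 2) / (12 * θ ^ 2) = -(θ⁻¹ ^ 2 * π ^ 2 / 12) := by
    field_simp
  rw [hθpow, hrpow, hexp, prod_range_succ_mul_add_one hθ.ne', Nat.factorial_succ]
  push_cast
  calc ((k + 1) * (k.factorial : ℝ)) ^ 2 * (θ ^ (k + 1) * θ ^ k) *
        (((k : ℝ) + 1) ^ θ⁻¹ / ((k : ℝ) + 1)) * exp (-(θ⁻¹ ^ 2 * π ^ 2 / 12))
      = ((k + 1) * k.factorial * θ ^ (k + 1)) * (θ ^ k * k.factorial) *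
          (((k : ℝ) + 1) ^ θ⁻¹ * exp (-(θ⁻¹ ^ 2 * π ^ 2 / 12))) := by
        field_simp
    _ ≤ ((k + 1) * k.factorial * θ ^ (k + 1)) * (θ ^ k * k.factorial) *
          ∏ i ∈ range k, (1 + θ⁻¹ / (i + 1)) := by
        gcongr
        exact rpow_mul_exp_le_prod_one_add_div (by positivity) k
    _ = _ := by ring

lemma prod_range_natCast_reflect {R M : Type*} [AddCommGroupWithOne R] [CommMonoid M]
    (g : R → M) (m : ℕ) : ∏ j ∈ range m, g ((m : R) - j - 1) = ∏ i ∈ range m, g i := by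
  rw [← prod_range_reflect (fun i => g i) m]
  refine prod_congr rfl fun j hj => ?_
  have hj : j + 1 ≤ m := mem_range.1 hj
  rw [Nat.sub_sub, Nat.cast_sub (by omega), Nat.cast_add, Nat.cast_one, sub_add_eq_sub_sub,
    sub_right_comm]

def hookFactor (θ a ℓ : ℝ) : ℝ := ((a + 1) * θ + ℓ) * (a * θ + ℓ + 1)

lemma natCast_sub_sub_one_nonneg {i j : ℕ} (h : j < i) : (0 : ℝ) ≤ i - j - 1 := by
  have : (j : ℝ) + 1 ≤ i := by exact_mod_cast h
  linarith

lemma jfun_eq_prod_hookFactor (θ : ℝ) (n : ℕ) (l : ℕ → ℕ) :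
    jfun θ n l = ∏ i ∈ range n, ∏ j ∈ range (l i),
      hookFactor θ ((l i : ℝ) - j - 1) ((conjPart n l j : ℝ) - i - 1) := rfl

lemma hookFactor_nonneg {θ a ℓ : ℝ} (hθ : 0 ≤ θ) (ha : 0 ≤ a) (hℓ : 0 ≤ ℓ) :
    0 ≤ hookFactor θ a ℓ := by
  unfold hookFactor; positivity

lemma hookFactor_le_hookFactor {θ a ℓ ℓ' : ℝ} (hθ : 0 ≤ θ) (ha : 0 ≤ a) (hℓ : 0 ≤ ℓ)
    (hℓℓ' : ℓ ≤ ℓ') : hookFactor θ a ℓ ≤ hookFactor θ a ℓ' := by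
  unfold hookFactor
  exact mul_le_mul (by linarith) (by linarith) (by positivity)
    (add_nonneg (by positivity) (hℓ.trans hℓℓ'))

lemma prod_hookFactor_leg_zero (θ : ℝ) (m : ℕ) :
    ∏ j ∈ range m, hookFactor θ ((m : ℝ) - j - 1) 0 =
      m.factorial * θ ^ m * ∏ i ∈ range m, ((i : ℝ) * θ + 1) := by
  rw [prod_range_natCast_reflect (hookFactor θ · 0)]
  simp only [hookFactor, add_zero, prod_mul_distrib, prod_const, card_range]
  push_cast [← prod_range_add_one_eq_factorial]
  ring

lemma le_conjPart {n : ℕ} {l : ℕ → ℕ} (hl : Antitone l) {i j : ℕ} (hi : i < n) (hj : j < l i) :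
    i + 1 ≤ conjPart n l j := by
  calc i + 1 = #(range (i + 1)) := (card_range _).symm
    _ ≤ conjPart n l j := card_le_card fun t ht => by
        rw [mem_range] at ht
        exact mem_filter.2 ⟨mem_range.2 (by omega), hj.trans_le (hl (by omega))⟩

lemma jfun_nonneg {θ : ℝ} (hθ : 0 ≤ θ) {n : ℕ} {l : ℕ → ℕ} (hl : Antitone l) :
    0 ≤ jfun θ n l := by
  rw [jfun_eq_prod_hookFactor]
  refine prod_nonneg fun i hi => prod_nonneg fun j hj => hookFactor_nonneg hθ
    (natCast_sub_sub_one_nonneg (mem_range.1 hj)) (natCast_sub_sub_one_nonneg ?_)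
  exact le_conjPart hl (mem_range.1 hi) (mem_range.1 hj)

namespace IsPartitionOf

variable {n : ℕ} {l : ℕ → ℕ}

lemma eq_zero_of_sub_lt (hl : IsPartitionOf n l) {i : ℕ} (hi : n - l 0 < i) : l i = 0 := by
  by_contra hli
  have hin : i < n := by
    by_contra! h
    exact hli (hl.2.1 i h)
  have hrow : l 0 + i ≤ ∑ t ∈ range (i + 1), l t := by
    rw [sum_range_succ', add_comm]
    gcongr
    calc i = ∑ _t ∈ range i, 1 := by simp
      _ ≤ ∑ t ∈ range i, l (t + 1) := sum_le_sum fun t ht => by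
          have := hl.1 (show t + 1 ≤ i from mem_range.1 ht)
          omega
  have := sum_le_sum_of_subset (f := l) (range_subset_range.2 (show i + 1 ≤ n by omega))
  rw [hl.2.2] at this
  omega

@[to_additive]
lemma prod_range_eq_mul_prod_tail {M : Type*} [CommMonoid M] (hl : IsPartitionOf n l)
    (f : ℕ → M) (hf : ∀ i, l i = 0 → f i = 1) :
    ∏ i ∈ range n, f i = f 0 * ∏ k ∈ range (n - l 0), f (k + 1) := by
  have hfull : ∏ i ∈ range n, f i = ∏ i ∈ range (n + 1), f i := by
    rw [prod_range_succ, hf n (hl.2.1 n le_rfl), mul_one]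
  have hhead : ∏ i ∈ range (n - l 0 + 1), f i = ∏ i ∈ range (n + 1), f i := by
    refine prod_subset (range_subset_range.2 (by omega)) fun i _ hi => hf i ?_
    exact hl.eq_zero_of_sub_lt (by rw [mem_range] at hi; omega)
  rw [hfull, ← hhead, prod_range_succ', mul_comm]

lemma conjPart_eq_add_one (hl : IsPartitionOf n l) {j : ℕ} (hj : j < l 0) :
    conjPart n l j = conjPart (n - l 0) (fun k => l (k + 1)) j + 1 := by
  simp only [conjPart, card_filter]
  rw [hl.sum_range_eq_add_sum_tail _ fun i hi => by simp [hi], if_pos hj, add_comm]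

lemma jfun_eq_prod_mul_jfun_tail (θ : ℝ) (hl : IsPartitionOf n l) :
    jfun θ n l = (∏ j ∈ range (l 0), hookFactor θ ((l 0 : ℝ) - j - 1) ((conjPart n l j : ℝ) - 1)) *
      jfun θ (n - l 0) (fun k => l (k + 1)) := by
  rw [jfun_eq_prod_hookFactor, hl.prod_range_eq_mul_prod_tail _ fun i hi => by simp [hi],
    jfun_eq_prod_hookFactor]
  congr 1
  · simp
  · refine prod_congr rfl fun k _ => prod_congr rfl fun j hj => ?_
    rw [hl.conjPart_eq_add_one ((mem_range.1 hj).trans_le (hl.1 (Nat.zero_le _)))]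
    push_cast
    ring_nf

lemma prod_hookFactor_leg_zero_le {θ : ℝ} (hθ : 0 ≤ θ) (hl : IsPartitionOf n l) :
    ∏ j ∈ range (l 0), hookFactor θ ((l 0 : ℝ) - j - 1) 0 ≤
      ∏ j ∈ range (l 0), hookFactor θ ((l 0 : ℝ) - j - 1) ((conjPart n l j : ℝ) - 1) := by
  refine prod_le_prod (fun j hj => ?_) fun j hj => ?_
  all_goals have harm := natCast_sub_sub_one_nonneg (mem_range.1 hj)
  · exact hookFactor_nonneg hθ harm le_rfl
  · have hn : 0 < n := by
      by_contra! hn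
      simp [hl.2.1 0 hn] at hj
    refine hookFactor_le_hookFactor hθ harm le_rfl ?_
    simpa using natCast_sub_sub_one_nonneg (le_conjPart hl.1 hn (mem_range.1 hj))

end IsPartitionOf

theorem jfun_first_row_split_general
    (θ : ℝ) (hθ : 0 < θ) (n : ℕ) (l : ℕ → ℕ)
    (hl : IsPartitionOf n l) :
    ((l 0).factorial : ℝ) ^ 2 * θ ^ (2 * (l 0 : ℝ) - 1) * (l 0 : ℝ) ^ (1 / θ - 1) *
        Real.exp (-(Real.pi ^ 2) / (12 * θ ^ 2)) * jfun θ (n - l 0) (fun k => l (k + 1))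
      ≤ jfun θ n l := by
  rw [hl.jfun_eq_prod_mul_jfun_tail θ]
  refine mul_le_mul_of_nonneg_right ?_ (jfun_nonneg hθ.le fun a b h => hl.1 (by omega))
  calc _ ≤ (l 0).factorial * θ ^ l 0 * ∏ i ∈ range (l 0), ((i : ℝ) * θ + 1) :=
        factorial_sq_mul_rpow_mul_exp_le θ hθ (l 0)
    _ = ∏ j ∈ range (l 0), hookFactor θ ((l 0 : ℝ) - j - 1) 0 :=
        (prod_hookFactor_leg_zero θ (l 0)).symm
    _ ≤ _ := hl.prod_hookFactor_leg_zero_le hθ.le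

/-- removing the first row of `λ` gives the inductive lower bound
`j_λ(θ) ≥ (λ₁!)² θ^{2λ₁−1} λ₁^{1/θ−1} exp(−π²/(12θ²)) j_μ(θ)` where
`μ = (λ₂, λ₃, …)`. -/
theorem jfun_first_row_split
    (θ : ℝ) (hθ : 0 < θ) (n : ℕ) (hn : 1 ≤ n) (l : ℕ → ℕ)
    (hl : IsPartitionOf n l) :
    ((l 0).factorial : ℝ) ^ 2 * θ ^ (2 * (l 0 : ℝ) - 1) * (l 0 : ℝ) ^ (1 / θ - 1) *
        Real.exp (-(Real.pi ^ 2) / (12 * θ ^ 2)) * jfun θ (n - l 0) (fun k => l (k + 1))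
      ≤ jfun θ n l :=
  jfun_first_row_split_general θ hθ n l hl
end
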